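/- An n-Hausdorff space X is n-H-closed if and only if for all open filters F₁,…,F_{n−1} on X such that F₁ ∪ ⋯ ∪ F_{n−1} has the finite intersection property, the join filter F₁ ∨ ⋯ ∨ F_{n−1} satisfies |a(F₁ ∨ ⋯ ∨ F_{n−1})| ≥ n−1. -/

import Mathlib

open Set Topology Function

universe u v

/-- A space is `n`-Hausdorff if any `n` distinct points admit open neighborhoods
with empty intersection. -/
def NHausdorff (X : Type u) [TopologicalSpace X] (n : ℕ) : Prop :=
  ∀ x : Fin n → X, Function.Injective x →
    ∃ U : Fin n → Set X, (∀ i, IsOpen (U i) ∧ x i ∈ U i) ∧ (⋂ i, U i) = (∅ : Set X)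

/-- An open filter on `X`: a nonempty family of nonempty open sets closed under
finite intersections and open supersets. -/
structure IsOpenFilter {X : Type u} [TopologicalSpace X] (F : Set (Set X)) : Prop where
  nonempty : F.Nonempty
  isOpen_mem : ∀ U ∈ F, IsOpen U
  nonempty_mem : ∀ U ∈ F, U.Nonempty
  inter_mem : ∀ U ∈ F, ∀ V ∈ F, U ∩ V ∈ F
  superset_mem : ∀ U ∈ F, ∀ V : Set X, IsOpen V → U ⊆ V → V ∈ F

/-- An open ultrafilter: a maximal open filter. -/
def IsOpenUltrafilter {X : Type u} [TopologicalSpace X] (F : Set (Set X)) : Prop :=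
  IsOpenFilter F ∧ ∀ G : Set (Set X), IsOpenFilter G → F ⊆ G → G = F

/-- The adherence of a family of sets: `⋂ {cl U : U ∈ F}`. -/
def adh {X : Type u} [TopologicalSpace X] (F : Set (Set X)) : Set X :=
  ⋂ U ∈ F, closure U

/-- `X` is `n`-H-closed: `X` is `n`-Hausdorff and closed in every `n`-Hausdorff space
in which it embeds. -/
def NHClosed (X : Type u) [TopologicalSpace X] (n : ℕ) : Prop :=
  NHausdorff X n ∧
    ∀ (Z : Type u) (_ : TopologicalSpace Z) (e : X → Z),
      NHausdorff Z n → IsEmbedding e → IsClosed (Set.range e)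

/-- The open filter generated by a family `S` of open sets: all open sets containing
a finite intersection of members of `S`. -/
def openFilterJoin {X : Type u} [TopologicalSpace X] (S : Set (Set X)) : Set (Set X) :=
  {U | IsOpen U ∧ ∃ t : Finset (Set X), ↑t ⊆ S ∧ ⋂₀ (t : Set (Set X)) ⊆ U}

/-!
If the adherence of the join `G` has fewer than `n - 1` points, adjoin to `X` one point whose
neighbourhoods are the sets `{∞} ∪ U`, `U ∈ G`. Among any `n` distinct points of this extension at
least `n - 1` lie in `X`, so one of them misses `cl U` for some `U ∈ G` and is separated from `∞`;
hence the extension is `n`-Hausdorff, while `X` is not closed in it since `∅ ∉ G`.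

Conversely, if `X` embeds as a non-closed subspace of an `n`-Hausdorff space, pick `z` in the
closure of the image but outside it and an open ultrafilter finer than the trace of the
neighbourhoods of `z`. Its adherence has `n - 1` points; with `z` these are `n` points, and every
open set around any of them pulls back to a member of the ultrafilter, so they cannot be separated.
-/

variable {X : Type u}

lemma exists_injective_fin_of_le_encard {s : Set X} {m : ℕ} (h : (m : ℕ∞) ≤ s.encard) :
    ∃ y : Fin m → X, Injective y ∧ ∀ i, y i ∈ s := by
  rw [← toENat_cardinalMk, Cardinal.natCast_le_toENat] at h
  obtain ⟨f⟩ := Cardinal.lift_mk_le'.1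
    (by simpa using h : Cardinal.lift (Cardinal.mk (Fin m)) ≤ Cardinal.lift (Cardinal.mk s))
  exact ⟨fun i => f i, Subtype.val_injective.comp f.injective, fun i => (f i).2⟩

lemma exists_eq_some_notMem_of_encard_lt {n : ℕ} {x : Fin n → Option X} (hx : Injective x)
    {A : Set X} (hA : ¬ ((n - 1 : ℕ) : ℕ∞) ≤ A.encard) : ∃ i y, x i = some y ∧ y ∉ A := by
  by_contra! h
  apply hA
  have hsub : range x ⊆ insert none (some '' A) := by
    rintro _ ⟨i, rfl⟩
    cases hxi : x i with
    | none => exact mem_insert _ _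
    | some y => exact mem_insert_of_mem _ (mem_image_of_mem _ (h i y hxi))
  have hn : (n : ℕ∞) ≤ A.encard + 1 := calc
    (n : ℕ∞) ≤ (range x).encard := by simpa using hx.encard_range
    _ ≤ (insert none (some '' A)).encard := encard_le_encard hsub
    _ ≤ (some '' A).encard + 1 := encard_insert_le _ _
    _ = A.encard + 1 := by rw [(Option.some_injective X).encard_image]
  rw [ENat.natCast_sub, Nat.cast_one]
  exact tsub_le_iff_right.2 hn

variable [TopologicalSpace X]

namespace IsOpenFilter

variable {F : Set (Set X)}

lemma univ_mem (hF : IsOpenFilter F) : univ ∈ F :=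
  let ⟨U, hU⟩ := hF.nonempty
  hF.superset_mem U hU univ isOpen_univ (subset_univ U)

lemma sInter_mem (hF : IsOpenFilter F) (t : Finset (Set X)) (ht : ↑t ⊆ F) :
    ⋂₀ (t : Set (Set X)) ∈ F := by
  classical
  induction t using Finset.induction_on with
  | empty => simpa using hF.univ_mem
  | insert U s _ ih =>
    rw [Finset.coe_insert, insert_subset_iff] at ht
    rw [Finset.coe_insert, sInter_insert]
    exact hF.inter_mem _ ht.1 _ (ih ht.2)

lemma iInter_mem {ι : Type*} [Fintype ι] (hF : IsOpenFilter F) {f : ι → Set X}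
    (hf : ∀ i, f i ∈ F) : ⋂ i, f i ∈ F := by
  classical
  simpa using hF.sInter_mem (Finset.univ.image f) (by simpa [range_subset_iff] using hf)

lemma sUnion_of_isChain {c : Set (Set (Set X))} (hc : ∀ F ∈ c, IsOpenFilter F)
    (hchain : IsChain (· ⊆ ·) c) (hne : c.Nonempty) : IsOpenFilter (⋃₀ c) := by
  obtain ⟨F₀, hF₀⟩ := hne
  refine ⟨?_, ?_, ?_, ?_, ?_⟩
  · obtain ⟨U, hU⟩ := (hc F₀ hF₀).nonempty
    exact ⟨U, F₀, hF₀, hU⟩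
  · rintro U ⟨F, hF, hU⟩
    exact (hc F hF).isOpen_mem U hU
  · rintro U ⟨F, hF, hU⟩
    exact (hc F hF).nonempty_mem U hU
  · rintro U ⟨F, hF, hU⟩ V ⟨F', hF', hV⟩
    rcases hchain.total hF hF' with h | h
    · exact ⟨F', hF', (hc F' hF').inter_mem U (h hU) V hV⟩
    · exact ⟨F, hF, (hc F hF).inter_mem U hU V (h hV)⟩
  · rintro U ⟨F, hF, hU⟩ V hV hUV
    exact ⟨F, hF, (hc F hF).superset_mem U hU V hV hUV⟩

lemma exists_isOpenUltrafilter_superset (hF : IsOpenFilter F) :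
    ∃ U, IsOpenUltrafilter U ∧ F ⊆ U := by
  obtain ⟨U, hFU, hU, hmax⟩ := zorn_subset_nonempty {G : Set (Set X) | IsOpenFilter G}
    (fun c hc hchain hne => ⟨⋃₀ c, sUnion_of_isChain hc hchain hne,
      fun _ => subset_sUnion_of_mem⟩) F hF
  exact ⟨U, ⟨hU, fun G hG hUG => (hmax hG hUG).antisymm hUG⟩, hFU⟩

end IsOpenFilter

lemma Filter.isOpenFilter_setOf_isOpen_mem (f : Filter X) [f.NeBot] :
    IsOpenFilter {U | IsOpen U ∧ U ∈ f} where
  nonempty := ⟨univ, isOpen_univ, univ_mem⟩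
  isOpen_mem _ hU := hU.1
  nonempty_mem _ hU := nonempty_of_mem hU.2
  inter_mem _ hU _ hV := ⟨hU.1.inter hV.1, inter_mem hU.2 hV.2⟩
  superset_mem _ hU _ hV hUV := ⟨hV, mem_of_superset hU.2 hUV⟩

namespace IsOpenUltrafilter

variable {F : Set (Set X)}

lemma mem_of_forall_inter_nonempty (hF : IsOpenUltrafilter F) {V : Set X} (hV : IsOpen V)
    (h : ∀ A ∈ F, (V ∩ A).Nonempty) : V ∈ F := by
  let G : Set (Set X) := {W | IsOpen W ∧ ∃ A ∈ F, A ∩ V ⊆ W}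
  have hFG : F ⊆ G := fun A hA => ⟨hF.1.isOpen_mem A hA, A, hA, inter_subset_left⟩
  have hG : IsOpenFilter G := by
    refine ⟨⟨V, hV, ?_⟩, fun W hW => hW.1, ?_, ?_, ?_⟩
    · obtain ⟨A, hA⟩ := hF.1.nonempty
      exact ⟨A, hA, inter_subset_right⟩
    · rintro W ⟨-, A, hA, hAW⟩
      obtain ⟨a, haV, haA⟩ := h A hA
      exact ⟨a, hAW ⟨haA, haV⟩⟩
    · rintro W ⟨hW, A, hA, hAW⟩ W' ⟨hW', A', hA', hAW'⟩
      exact ⟨hW.inter hW', A ∩ A', hF.1.inter_mem A hA A' hA',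
        fun a ha => ⟨hAW ⟨ha.1.1, ha.2⟩, hAW' ⟨ha.1.2, ha.2⟩⟩⟩
    · rintro W ⟨-, A, hA, hAW⟩ W' hW' hWW'
      exact ⟨hW', A, hA, hAW.trans hWW'⟩
  rw [← hF.2 G hG hFG]
  obtain ⟨A, hA⟩ := hF.1.nonempty
  exact ⟨hV, A, hA, inter_subset_right⟩

lemma mem_of_mem_adh (hF : IsOpenUltrafilter F) {V : Set X} (hV : IsOpen V) {x : X}
    (hx : x ∈ adh F) (hxV : x ∈ V) : V ∈ F :=
  hF.mem_of_forall_inter_nonempty hV fun A hA =>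
    mem_closure_iff.1 (mem_iInter₂.1 hx A hA) V hV hxV

end IsOpenUltrafilter

lemma adh_anti {F G : Set (Set X)} (h : F ⊆ G) : adh G ⊆ adh F :=
  biInter_subset_biInter_left h

lemma subset_openFilterJoin {S : Set (Set X)} (hS : ∀ U ∈ S, IsOpen U) :
    S ⊆ openFilterJoin S :=
  fun U hU => ⟨hS U hU, {U}, by simpa using hU, by simp⟩

lemma isOpenFilter_openFilterJoin {S : Set (Set X)}
    (hS : ∀ t : Finset (Set X), ↑t ⊆ S → (⋂₀ (t : Set (Set X))).Nonempty) :
    IsOpenFilter (openFilterJoin S) := by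
  classical
  refine ⟨⟨univ, isOpen_univ, ∅, by simp⟩, fun U hU => hU.1, ?_, ?_, ?_⟩
  · rintro U ⟨-, t, htS, htU⟩
    exact (hS t htS).mono htU
  · rintro U ⟨hU, t, htS, htU⟩ V ⟨hV, s, hsS, hsV⟩
    refine ⟨hU.inter hV, t ∪ s, by simpa using union_subset htS hsS, ?_⟩
    rw [Finset.coe_union, sInter_union]
    exact inter_subset_inter htU hsV
  · rintro U ⟨-, t, htS, htU⟩ V hV hUV
    exact ⟨hV, t, htS, htU.trans hUV⟩

lemma le_encard_adh_of_forall_join {m : ℕ}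
    (h : ∀ F : Fin m → Set (Set X), (∀ i, IsOpenFilter (F i)) →
      (∀ t : Finset (Set X), ↑t ⊆ ⋃ i, F i → (⋂₀ (t : Set (Set X))).Nonempty) →
      (m : ℕ∞) ≤ (adh (openFilterJoin (⋃ i, F i))).encard)
    {U : Set (Set X)} (hU : IsOpenFilter U) : (m : ℕ∞) ≤ (adh U).encard := by
  rcases m.eq_zero_or_pos with rfl | hm
  · simp
  have : Nonempty (Fin m) := ⟨⟨0, hm⟩⟩
  have hunion : (⋃ _ : Fin m, U) = U := iUnion_const U
  calc (m : ℕ∞) ≤ (adh (openFilterJoin (⋃ _ : Fin m, U))).encard :=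
        h (fun _ => U) (fun _ => hU) fun t ht => hU.nonempty_mem _ (hU.sInter_mem t (hunion ▸ ht))
    _ ≤ (adh U).encard :=
        encard_le_encard (adh_anti (by rw [hunion]; exact subset_openFilterJoin hU.isOpen_mem))

lemma exists_isOpen_iInter_eq_empty_of_disjoint {Y ι : Type*} [TopologicalSpace Y]
    (x : ι → Y) (i j : ι) {U V : Set Y} (hU : IsOpen U) (hV : IsOpen V) (hxU : x i ∈ U)
    (hxV : x j ∈ V) (hUV : Disjoint U V) :
    ∃ W : ι → Set Y, (∀ t, IsOpen (W t) ∧ x t ∈ W t) ∧ ⋂ t, W t = ∅ := by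
  classical
  refine ⟨fun t => (if t = i then U else univ) ∩ (if t = j then V else univ),
    fun t => ⟨.inter ?_ ?_, ?_, ?_⟩, ?_⟩
  · split_ifs <;> first | exact hU | exact isOpen_univ
  · split_ifs <;> first | exact hV | exact isOpen_univ
  · split_ifs with h
    exacts [h ▸ hxU, trivial]
  · split_ifs with h
    exacts [h ▸ hxV, trivial]
  · refine eq_empty_of_forall_notMem fun y hy => ?_
    have hi := (mem_iInter.1 hy i).1
    have hj := (mem_iInter.1 hy j).2
    simp only [if_pos] at hi hj
    exact disjoint_left.1 hUV hi hj

section OpenFilterExtension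

variable {G : Set (Set X)} (hG : IsOpenFilter G)

/-- `X ∪ {∞}` with `∞ = none`, the neighbourhoods of `∞` being the sets `{∞} ∪ U`, `U ∈ G`. -/
abbrev openFilterExtension : TopologicalSpace (Option X) where
  IsOpen O := IsOpen (some ⁻¹' O) ∧ (none ∈ O → some ⁻¹' O ∈ G)
  isOpen_univ := ⟨isOpen_univ, fun _ => hG.univ_mem⟩
  isOpen_inter O O' hO hO' :=
    ⟨hO.1.inter hO'.1, fun h => hG.inter_mem _ (hO.2 h.1) _ (hO'.2 h.2)⟩
  isOpen_sUnion s hs := by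
    refine ⟨?_, ?_⟩
    · rw [preimage_sUnion]
      exact isOpen_biUnion fun t ht => (hs t ht).1
    · rintro ⟨t, ht, hnt⟩
      rw [preimage_sUnion]
      exact hG.superset_mem _ ((hs t ht).2 hnt) _ (isOpen_biUnion fun t' ht' => (hs t' ht').1)
        (subset_biUnion_of_mem (u := fun t' => some ⁻¹' t') ht)

lemma isOpen_openFilterExtension_iff {O : Set (Option X)} :
    IsOpen[openFilterExtension hG] O ↔ IsOpen (some ⁻¹' O) ∧ (none ∈ O → some ⁻¹' O ∈ G) :=
  Iff.rfl

lemma isOpen_image_some_openFilterExtension {V : Set X} (hV : IsOpen V) :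
    IsOpen[openFilterExtension hG] (some '' V) := by
  rw [isOpen_openFilterExtension_iff, preimage_image_eq _ (Option.some_injective X)]
  exact ⟨hV, fun h => by simp at h⟩

lemma isOpen_insert_none_openFilterExtension {U : Set X} (hU : U ∈ G) :
    IsOpen[openFilterExtension hG] (insert none (some '' U)) := by
  have hpre : some ⁻¹' insert none (some '' U) = U := by ext; simp
  rw [isOpen_openFilterExtension_iff, hpre]
  exact ⟨hG.isOpen_mem U hU, fun _ => hU⟩

lemma isEmbedding_some_openFilterExtension :
    @IsEmbedding X (Option X) _ (openFilterExtension hG) some := by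
  let _ := openFilterExtension hG
  refine ⟨⟨TopologicalSpace.ext_iff.2 fun U => ?_⟩, Option.some_injective X⟩
  rw [@isOpen_induced_iff]
  refine ⟨fun hU => ⟨some '' U, isOpen_image_some_openFilterExtension hG hU,
    preimage_image_eq U (Option.some_injective X)⟩, ?_⟩
  rintro ⟨O, hO, rfl⟩
  exact hO.1

/-- The complement `{none}` of the range would be open, forcing `∅ ∈ G`. -/
lemma not_isClosed_range_some_openFilterExtension :
    ¬ IsClosed[openFilterExtension hG] (range some) := by
  let _ := openFilterExtension hG
  intro hclosed
  have hcompl : (range some)ᶜ = ({none} : Set (Option X)) := by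
    ext o; cases o <;> simp
  have hempty := (hclosed.isOpen_compl.2 (by simp [hcompl]))
  rw [hcompl, preimage_singleton_eq_empty.2 (by simp)] at hempty
  exact not_nonempty_empty (hG.nonempty_mem _ hempty)

lemma nHausdorff_openFilterExtension {n : ℕ} (hX : NHausdorff X n)
    (hadh : ¬ ((n - 1 : ℕ) : ℕ∞) ≤ (adh G).encard) :
    @NHausdorff (Option X) (openFilterExtension hG) n := by
  let _ := openFilterExtension hG
  intro x hx
  by_cases hnone : none ∈ range x
  · obtain ⟨j, hj⟩ := hnone
    obtain ⟨i, y, hi, hy⟩ := exists_eq_some_notMem_of_encard_lt hx hadh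
    obtain ⟨U, hU, hyU⟩ : ∃ U ∈ G, y ∉ closure U := by simpa [adh] using hy
    refine exists_isOpen_iInter_eq_empty_of_disjoint x j i
      (isOpen_insert_none_openFilterExtension hG hU)
      (isOpen_image_some_openFilterExtension hG isClosed_closure.isOpen_compl)
      (by rw [hj]; exact mem_insert _ _) (by rw [hi]; exact mem_image_of_mem _ hyU) ?_
    rw [disjoint_left]
    rintro _ (rfl | ⟨a, ha, rfl⟩) ⟨b, hb, hba⟩
    · exact Option.some_ne_none b hba
    · exact hb (Option.some_injective X hba ▸ subset_closure ha)
  · have hsome : ∀ i, ∃ y, x i = some y := fun i =>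
      Option.ne_none_iff_exists'.1 fun h => hnone ⟨i, h⟩
    choose y hy using hsome
    have hy_inj : Injective y := fun a b h => hx (by rw [hy, hy, h])
    obtain ⟨U, hU, hU_empty⟩ := hX y hy_inj
    have : Nonempty (Fin n) := ⟨⟨0, Nat.pos_of_ne_zero (by rintro rfl; simp at hadh)⟩⟩
    refine ⟨fun i => some '' U i, fun i => ⟨isOpen_image_some_openFilterExtension hG (hU i).1,
      by rw [hy i]; exact mem_image_of_mem _ (hU i).2⟩, ?_⟩
    rw [← (Option.some_injective X).injOn.image_iInter_eq, hU_empty, image_empty]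

end OpenFilterExtension

lemma isClosed_range_of_forall_le_encard_adh {Z : Type*} [TopologicalSpace Z] {n : ℕ}
    (hZ : NHausdorff Z n) {e : X → Z} (he : Continuous e) (he_inj : Injective e)
    (hadh : ∀ F : Set (Set X), IsOpenFilter F → ((n - 1 : ℕ) : ℕ∞) ≤ (adh F).encard) :
    IsClosed (range e) := by
  refine closure_subset_iff_isClosed.1 fun z hz => ?_
  by_contra hze
  have : (Filter.comap e (𝓝 z)).NeBot :=
    Filter.comap_neBot_iff_frequently.2 (mem_closure_iff_frequently.1 hz)
  obtain ⟨F, hF, hF_sub⟩ :=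
    (Filter.comap e (𝓝 z)).isOpenFilter_setOf_isOpen_mem.exists_isOpenUltrafilter_superset
  cases n with
  | zero =>
    obtain ⟨W, -, hW⟩ := hZ finZeroElim (injective_of_subsingleton _)
    rw [iInter_of_empty, univ_eq_empty_iff] at hW
    exact hW.elim z
  | succ m =>
    obtain ⟨y, hy_inj, hy⟩ := exists_injective_fin_of_le_encard (by simpa using hadh F hF.1)
    have hx : Injective (Fin.cons z (e ∘ y) : Fin (m + 1) → Z) :=
      Fin.cons_injective_iff.2 ⟨fun ⟨i, hi⟩ => hze ⟨y i, hi⟩, he_inj.comp hy_inj⟩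
    obtain ⟨W, hW, hW_empty⟩ := hZ _ hx
    have hmem : ∀ t, e ⁻¹' W t ∈ F := Fin.cases
      (hF_sub ⟨(hW 0).1.preimage he, Filter.preimage_mem_comap ((hW 0).1.mem_nhds (hW 0).2)⟩)
      fun i => hF.mem_of_mem_adh ((hW i.succ).1.preimage he) (hy i) (hW i.succ).2
    obtain ⟨a, ha⟩ := hF.1.nonempty_mem _ (hF.1.iInter_mem hmem)
    rw [← preimage_iInter, hW_empty] at ha
    exact ha

theorem stmt12_general {X : Type u} [TopologicalSpace X] (n : ℕ)
    (hX : NHausdorff X n) :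
    NHClosed X n ↔
      ∀ F : Fin (n - 1) → Set (Set X), (∀ i, IsOpenFilter (F i)) →
        (∀ t : Finset (Set X), ↑t ⊆ ⋃ i, F i → (⋂₀ (t : Set (Set X))).Nonempty) →
        (n - 1 : ℕ) ≤ (adh (openFilterJoin (⋃ i, F i))).encard := by
  refine ⟨fun hXc F _ hFIP => ?_, fun h => ⟨hX, fun Z _ e hZ he => ?_⟩⟩
  · have hG := isOpenFilter_openFilterJoin hFIP
    by_contra hlt
    exact not_isClosed_range_some_openFilterExtension hG <|
      hXc.2 _ (openFilterExtension hG) some (nHausdorff_openFilterExtension hG hX hlt)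
        (isEmbedding_some_openFilterExtension hG)
  · exact isClosed_range_of_forall_le_encard_adh hZ he.continuous he.injective fun _ =>
      le_encard_adh_of_forall_join h

theorem stmt12 {X : Type u} [TopologicalSpace X] (n : ℕ) (hn : 2 ≤ n)
    (hX : NHausdorff X n) :
    NHClosed X n ↔
      ∀ F : Fin (n - 1) → Set (Set X), (∀ i, IsOpenFilter (F i)) →
        (∀ t : Finset (Set X), ↑t ⊆ ⋃ i, F i → (⋂₀ (t : Set (Set X))).Nonempty) →
        (n - 1 : ℕ) ≤ (adh (openFilterJoin (⋃ i, F i))).encard :=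
  stmt12_general n hX
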